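/- arXiv:2509.03076 — 2 statements merged into one kernel-verified Lean document; each statement's English description precedes it below -/
import Mathlib

section
/- Let f be a holomorphic self-map of the unit disk D and h a left straightening of {f^n}. Then the hyperbolic step satisfies s^f(z) = ω(h(z), h(f(z))) for every z ∈ D. -/
/-!
Each `γinv n` is an isometry of the Poincaré distance (Schwarz–Pick applied to it and to its
inverse), so `ω(fⁿ z, fⁿ⁺¹ z) = ω(γₙ⁻¹ fⁿ z, γₙ⁻¹ fⁿ (f z))`. The right-hand side converges to
`ω(h z, h (f z))` because `γₙ⁻¹ ∘ fⁿ → h` pointwise on the disk and `ω` is continuous there.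
-/

open Complex Metric Filter Set

/-- Inverse hyperbolic tangent. -/
noncomputable def artanh (t : ℝ) : ℝ := (1/2) * Real.log ((1 + t) / (1 - t))

/-- Poincaré distance on the unit disk. -/
noncomputable def pd (z w : ℂ) : ℝ :=
  artanh ‖(w - z) / (1 - (starRingEnd ℂ) z * w)‖

/-- Holomorphic self-map of the unit disk. -/
def HolSelfDisk (f : ℂ → ℂ) : Prop :=
  DifferentiableOn ℂ f (ball (0:ℂ) 1) ∧ MapsTo f (ball (0:ℂ) 1) (ball (0:ℂ) 1)

/-- A pair of maps that are mutually inverse holomorphic self-maps of the disk,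
i.e. an automorphism of the disk together with its inverse. -/
def IsDiskAutPair (γ γinv : ℂ → ℂ) : Prop :=
  HolSelfDisk γ ∧ HolSelfDisk γinv ∧
  (∀ z ∈ ball (0:ℂ) 1, γinv (γ z) = z) ∧ (∀ z ∈ ball (0:ℂ) 1, γ (γinv z) = z)

open ComplexConjugate Topology

noncomputable def mobius (a z : ℂ) : ℂ := (z - a) / (1 - conj a * z)

lemma pd_eq_artanh_norm_mobius (z w : ℂ) : pd z w = artanh ‖mobius z w‖ := rfl

lemma one_sub_conj_mul_ne_zero {a z : ℂ} (ha : ‖a‖ < 1) (hz : ‖z‖ < 1) :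
    1 - conj a * z ≠ 0 := by
  refine sub_ne_zero.2 fun h => ?_
  have : ‖conj a * z‖ < 1 := by
    rw [norm_mul, Complex.norm_conj]
    nlinarith [norm_nonneg a, norm_nonneg z]
  simp [← h] at this

lemma normSq_one_sub_conj_mul_sub_normSq_sub (a z : ℂ) :
    normSq (1 - conj a * z) - normSq (z - a) = (1 - normSq a) * (1 - normSq z) := by
  simp only [normSq_apply, sub_re, sub_im, mul_re, mul_im, conj_re, conj_im, one_re, one_im]
  ring

lemma norm_mobius_lt_one {a z : ℂ} (ha : ‖a‖ < 1) (hz : ‖z‖ < 1) : ‖mobius a z‖ < 1 := by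
  have hden : 0 < ‖1 - conj a * z‖ := norm_pos_iff.2 (one_sub_conj_mul_ne_zero ha hz)
  rw [mobius, norm_div, div_lt_one hden, ← sq_lt_sq₀ (norm_nonneg _) hden.le, Complex.sq_norm,
    Complex.sq_norm]
  have ha' : normSq a < 1 := by rw [← Complex.sq_norm]; nlinarith [norm_nonneg a]
  have hz' : normSq z < 1 := by rw [← Complex.sq_norm]; nlinarith [norm_nonneg z]
  nlinarith [normSq_one_sub_conj_mul_sub_normSq_sub a z]

lemma mapsTo_mobius {a : ℂ} (ha : ‖a‖ < 1) : MapsTo (mobius a) (ball 0 1) (ball 0 1) :=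
  fun _ hz => mem_ball_zero_iff.2 (norm_mobius_lt_one ha (mem_ball_zero_iff.1 hz))

lemma differentiableOn_mobius {a : ℂ} (ha : ‖a‖ < 1) :
    DifferentiableOn ℂ (mobius a) (ball 0 1) := fun _ hz =>
  DifferentiableAt.differentiableWithinAt <| DifferentiableAt.div (by fun_prop) (by fun_prop)
    (one_sub_conj_mul_ne_zero ha (mem_ball_zero_iff.1 hz))

lemma holSelfDisk_mobius {a : ℂ} (ha : ‖a‖ < 1) : HolSelfDisk (mobius a) :=
  ⟨differentiableOn_mobius ha, mapsTo_mobius ha⟩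

@[simp] lemma mobius_self (a : ℂ) : mobius a a = 0 := by simp [mobius]

@[simp] lemma mobius_neg_zero (a : ℂ) : mobius (-a) 0 = a := by simp [mobius]

lemma mobius_neg_mobius {a z : ℂ} (ha : ‖a‖ < 1) (hz : ‖z‖ < 1) :
    mobius (-a) (mobius a z) = z := by
  have h₁ : 1 - z * conj a ≠ 0 := by rw [mul_comm]; exact one_sub_conj_mul_ne_zero ha hz
  have h₂ := one_sub_conj_mul_ne_zero (a := -a) (by simpa using ha) (norm_mobius_lt_one ha hz)
  simp only [mobius, map_neg, neg_mul, sub_neg_eq_add] at h₂ ⊢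
  rw [div_eq_iff h₂]
  field_simp
  ring

lemma HolSelfDisk.comp {f g : ℂ → ℂ} (hf : HolSelfDisk f) (hg : HolSelfDisk g) :
    HolSelfDisk (f ∘ g) :=
  ⟨hf.1.comp hg.1 hg.2, hf.2.comp hg.2⟩

/-- Schwarz–Pick lemma, for the pseudo-hyperbolic distance `‖mobius a b‖`. -/
lemma HolSelfDisk.norm_mobius_le {g : ℂ → ℂ} (hg : HolSelfDisk g) {a b : ℂ}
    (ha : a ∈ ball (0 : ℂ) 1) (hb : b ∈ ball (0 : ℂ) 1) :
    ‖mobius (g a) (g b)‖ ≤ ‖mobius a b‖ := by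
  rw [mem_ball_zero_iff] at ha hb
  -- Schwarz's lemma applies to `F`, which fixes `0` and sends `mobius a b` to `mobius (g a) (g b)`.
  set F := mobius (g a) ∘ g ∘ mobius (-a)
  have hF : HolSelfDisk F :=
    (holSelfDisk_mobius (mem_ball_zero_iff.1 (hg.2 (mem_ball_zero_iff.2 ha)))).comp
      (hg.comp (holSelfDisk_mobius (by simpa using ha)))
  have hF0 : F 0 = 0 := by simp [F]
  simpa [F, mobius_neg_mobius ha hb] using
    norm_le_norm_of_mapsTo_ball hF.1 (hF.2.mono_right ball_subset_closedBall) hF0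
      (norm_mobius_lt_one ha hb)

lemma IsDiskAutPair.pd_apply_inv {γ γinv : ℂ → ℂ} (hγ : IsDiskAutPair γ γinv) {a b : ℂ}
    (ha : a ∈ ball (0 : ℂ) 1) (hb : b ∈ ball (0 : ℂ) 1) :
    pd (γinv a) (γinv b) = pd a b := by
  obtain ⟨hγhol, hγinvhol, -, hγγinv⟩ := hγ
  have hle := hγhol.norm_mobius_le (hγinvhol.2 ha) (hγinvhol.2 hb)
  rw [hγγinv a ha, hγγinv b hb] at hle
  rw [pd_eq_artanh_norm_mobius, pd_eq_artanh_norm_mobius,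
    le_antisymm (hγinvhol.norm_mobius_le ha hb) hle]

lemma continuousAt_artanh {t : ℝ} (ht : |t| < 1) : ContinuousAt artanh t := by
  obtain ⟨h₁, h₂⟩ := abs_lt.1 ht
  have hne : 1 - t ≠ 0 := by linarith
  unfold artanh
  exact continuousAt_const.mul ((ContinuousAt.div (by fun_prop) (by fun_prop) hne).log
    (div_pos (by linarith) (by linarith)).ne')

lemma continuousAt_pd {u v : ℂ} (hu : ‖u‖ < 1) (hv : ‖v‖ < 1) :
    ContinuousAt (fun p : ℂ × ℂ => pd p.1 p.2) (u, v) := by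
  have hmobius : ContinuousAt (fun p : ℂ × ℂ => mobius p.1 p.2) (u, v) :=
    (continuous_snd.sub continuous_fst).continuousAt.div (by fun_prop)
      (one_sub_conj_mul_ne_zero hu hv)
  have hartanh : ContinuousAt artanh ‖mobius u v‖ :=
    continuousAt_artanh (by rw [abs_norm]; exact norm_mobius_lt_one hu hv)
  exact hartanh.comp (f := fun p : ℂ × ℂ => ‖mobius p.1 p.2‖) hmobius.norm

theorem stmt6 (f : ℂ → ℂ) (hf : HolSelfDisk f)
    (γ γinv : ℕ → ℂ → ℂ) (h : ℂ → ℂ)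
    (hγ : ∀ n, IsDiskAutPair (γ n) (γinv n)) (hh : HolSelfDisk h)
    (hconv : TendstoLocallyUniformlyOn (fun n z => γinv n (f^[n] z)) h atTop (ball (0:ℂ) 1)) :
    ∀ z ∈ ball (0:ℂ) 1,
      Tendsto (fun n => pd (f^[n] z) (f^[n+1] z)) atTop (nhds (pd (h z) (h (f z)))) := by
  intro z hz
  have hfz : f z ∈ ball (0 : ℂ) 1 := hf.2 hz
  have hpair : Tendsto (fun n => (γinv n (f^[n] z), γinv n (f^[n] (f z)))) atTop
      (𝓝 (h z, h (f z))) :=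
    (hconv.tendsto_at hz).prodMk_nhds (hconv.tendsto_at hfz)
  have hlim := (continuousAt_pd (mem_ball_zero_iff.1 (hh.2 hz))
    (mem_ball_zero_iff.1 (hh.2 hfz))).tendsto.comp hpair
  refine hlim.congr fun n => ?_
  rw [Function.comp_apply, (hγ n).pd_apply_inv (hf.2.iterate n hz) (hf.2.iterate n hfz),
    Function.iterate_succ_apply]
end

section
/- Let F be a holomorphic self-map of the upper half-plane H⁺, parabolic with Wolff point at ∞, and let w_0 ∈ H⁺. Then F^n(w)/F^n(w_0) → 1 as n → ∞, uniformly on compact subsets of H⁺. -/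
open Complex Metric Filter Set

/-- The upper half-plane as a subset of ℂ. -/
def UHP : Set ℂ := {w : ℂ | 0 < w.im}

/-- Poincaré distance on the upper half-plane. -/
noncomputable def pdH (w₁ w₂ : ℂ) : ℝ :=
  artanh (‖(w₂ - w₁) / (w₂ - (starRingEnd ℂ) w₁)‖)

/-- Holomorphic self-map of the upper half-plane. -/
def HolSelfUHP (F : ℂ → ℂ) : Prop :=
  DifferentiableOn ℂ F UHP ∧ MapsTo F UHP UHP

/-- A sequence in the upper half-plane converges non-tangentially to ∞. -/
def NonTangToInf (w : ℕ → ℂ) : Prop :=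
  Tendsto (fun n => ‖w n‖) atTop atTop ∧
  ∃ ε > 0, ∀ n, ε * ‖w n‖ ≤ (w n).im

/-- `F` is a parabolic holomorphic self-map of the upper half-plane with Wolff point ∞:
fixed-point-free, iterates tend to ∞ locally uniformly, and `F w / w → 1` along
sequences converging non-tangentially to ∞. -/
def ParabolicAtInf (F : ℂ → ℂ) : Prop :=
  HolSelfUHP F ∧ (∀ w ∈ UHP, F w ≠ w) ∧
  (∀ K ⊆ UHP, IsCompact K → ∀ M : ℝ,
    ∀ᶠ n in atTop, ∀ w ∈ K, M ≤ ‖F^[n] w‖) ∧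
  (∀ w : ℕ → ℂ, (∀ n, w n ∈ UHP) → NonTangToInf w →
    Tendsto (fun n => F (w n) / w n) atTop (nhds 1))

/-!
By Schwarz–Pick the pseudo-hyperbolic distance `d n` between the orbits of `x` and `w₀`
decreases, and `‖F^[n] x / F^[n] w₀ - 1‖` is at most a constant times `d n` times the slope
`Im ζ / ‖ζ‖` of `ζ = F^[n] w₀`. If the hyperbolic step of the orbit of `w₀` tends to `0`, then
`d n → 0`: otherwise, at a time `m` where `d m` has almost reached its positive limit, the
hyperbolic difference quotient of every `F^[k]` at `F^[m] w₀` is nearly unimodular at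
`F^[m] x`, and Schwarz–Pick applied to it keeps the later steps above half the step at `m`.
If the step does not tend to `0`, the orbit tends to `∞` tangentially, because along a
non-tangential subsequence `F w / w → 1` would force the step to `0`. Either way the ratio
tends to `1`; Schwarz–Pick bounds `‖F^[n] y - F^[n] x‖` by a small multiple of `‖F^[n] x‖`
for `y` near `x`, which makes the convergence locally uniform.
-/
open ComplexConjugate Topology

noncomputable def diskMobius (c v : ℂ) : ℂ := (v - c) / (1 - conj c * v)

lemma sq_norm_one_sub_conj_mul_sub_sq_norm_sub (c v : ℂ) :
    ‖1 - conj c * v‖ ^ 2 - ‖v - c‖ ^ 2 = (1 - ‖c‖ ^ 2) * (1 - ‖v‖ ^ 2) := by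
  simp only [Complex.sq_norm, normSq_apply, sub_re, sub_im, mul_re, mul_im, conj_re, conj_im,
    one_re, one_im]
  ring

lemma one_sub_conj_mul_ne_zero_s13 {c v : ℂ} (h : ‖c‖ * ‖v‖ < 1) : 1 - conj c * v ≠ 0 := by
  intro h0
  have : ‖conj c * v‖ = 1 := by rw [← sub_eq_zero.1 h0, norm_one]
  rw [norm_mul, RCLike.norm_conj] at this
  linarith

lemma norm_diskMobius_le_one {c v : ℂ} (hc : ‖c‖ < 1) (hv : ‖v‖ ≤ 1) :
    ‖diskMobius c v‖ ≤ 1 := by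
  have hden := one_sub_conj_mul_ne_zero_s13 (c := c) (v := v) (by nlinarith [norm_nonneg c])
  rw [diskMobius, norm_div, div_le_one (norm_pos_iff.2 hden), ← sq_le_sq₀ (norm_nonneg _)
    (norm_nonneg _), ← sub_nonneg, sq_norm_one_sub_conj_mul_sub_sq_norm_sub]
  exact mul_nonneg (by nlinarith [norm_nonneg c]) (by nlinarith [norm_nonneg v])

lemma norm_diskMobius_lt_one {c v : ℂ} (hc : ‖c‖ < 1) (hv : ‖v‖ < 1) :
    ‖diskMobius c v‖ < 1 := by
  have hden := one_sub_conj_mul_ne_zero_s13 (c := c) (v := v) (by nlinarith [norm_nonneg c])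
  rw [diskMobius, norm_div, div_lt_one (norm_pos_iff.2 hden), ← sq_lt_sq₀ (norm_nonneg _)
    (norm_nonneg _), ← sub_pos, sq_norm_one_sub_conj_mul_sub_sq_norm_sub]
  exact mul_pos (by nlinarith [norm_nonneg c]) (by nlinarith [norm_nonneg v])

lemma mapsTo_diskMobius {c : ℂ} (hc : ‖c‖ < 1) : MapsTo (diskMobius c) (ball 0 1) (ball 0 1) :=
  fun v hv => by
    rw [mem_ball_zero_iff] at hv ⊢
    exact norm_diskMobius_lt_one hc hv

lemma differentiableOn_diskMobius {c : ℂ} (hc : ‖c‖ < 1) :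
    DifferentiableOn ℂ (diskMobius c) (closedBall 0 1) := by
  refine (differentiableOn_id.sub_const c).div (differentiableOn_const _ |>.sub
    ((differentiableOn_const _).mul differentiableOn_id)) fun v hv => ?_
  rw [mem_closedBall_zero_iff] at hv
  exact one_sub_conj_mul_ne_zero_s13 (by nlinarith [norm_nonneg c, norm_nonneg v])

@[simp] lemma diskMobius_self (c : ℂ) : diskMobius c c = 0 := by simp [diskMobius]

@[simp] lemma diskMobius_neg_zero (c : ℂ) : diskMobius (-c) 0 = c := by simp [diskMobius]

lemma diskMobius_neg_diskMobius {c v : ℂ} (hc : ‖c‖ < 1) (hv : ‖v‖ < 1) :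
    diskMobius (-c) (diskMobius c v) = v := by
  have h₁ := one_sub_conj_mul_ne_zero_s13 (c := c) (v := v) (by nlinarith [norm_nonneg c])
  have h₂ := one_sub_conj_mul_ne_zero_s13 (c := c) (v := c) (by nlinarith [norm_nonneg c])
  have hnum : diskMobius c v + c = (1 - conj c * c) * v / (1 - conj c * v) := by
    rw [diskMobius, div_add' _ _ _ h₁]; ring
  have hden : 1 + conj c * diskMobius c v = (1 - conj c * c) / (1 - conj c * v) := by
    rw [diskMobius]; field_simp; ring
  rw [diskMobius, map_neg, sub_neg_eq_add, neg_mul, sub_neg_eq_add, hnum, hden]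
  field_simp

/-- The Schwarz–Pick inequality. -/
theorem norm_sub_mul_le_of_mapsTo_closedBall {g : ℂ → ℂ} (hd : DifferentiableOn ℂ g (ball 0 1))
    (hg : MapsTo g (ball 0 1) (closedBall 0 1)) {a b : ℂ} (ha : a ∈ ball 0 1)
    (hb : b ∈ ball 0 1) :
    ‖g a - g b‖ * ‖1 - conj a * b‖ ≤ ‖a - b‖ * ‖1 - conj (g a) * g b‖ := by
  rw [mem_ball_zero_iff] at ha hb
  have hga : ‖g a‖ ≤ 1 := mem_closedBall_zero_iff.1 (hg (mem_ball_zero_iff.2 ha))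
  rcases hga.eq_or_lt with hga | hga
  · have hmax : IsMaxOn (norm ∘ g) (ball 0 1) a := fun u hu => by
      simpa [hga] using hg hu
    have hconst := Complex.eqOn_of_isPreconnected_of_isMaxOn_norm
      (convex_ball (0 : ℂ) 1).isPreconnected isOpen_ball hd (mem_ball_zero_iff.2 ha) hmax
      (mem_ball_zero_iff.2 hb)
    simp only [hconst, Function.const_apply, sub_self, norm_zero, zero_mul]
    positivity
  -- Move `a` and `g a` to the origin and apply the Schwarz lemma.
  have hna : ‖-a‖ < 1 := by rwa [norm_neg]
  have hθ := Complex.norm_le_norm_of_mapsTo_ball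
    (f := diskMobius (g a) ∘ g ∘ diskMobius (-a)) (R := 1) (z := diskMobius a b)
    ((differentiableOn_diskMobius hga).comp
      (hd.comp ((differentiableOn_diskMobius hna).mono ball_subset_closedBall)
        (mapsTo_diskMobius hna)) (hg.comp (mapsTo_diskMobius hna)))
    (fun v hv => mem_closedBall_zero_iff.2 <| norm_diskMobius_le_one hga <|
      mem_closedBall_zero_iff.1 <| hg <| mapsTo_diskMobius hna hv)
    (by simp) (norm_diskMobius_lt_one ha hb)
  have hgb : ‖g b‖ ≤ 1 := mem_closedBall_zero_iff.1 (hg (mem_ball_zero_iff.2 hb))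
  have d₁ := one_sub_conj_mul_ne_zero_s13 (c := g a) (v := g b) (by nlinarith [norm_nonneg (g a)])
  have d₂ := one_sub_conj_mul_ne_zero_s13 (c := a) (v := b) (by nlinarith [norm_nonneg a])
  simp only [Function.comp_apply, diskMobius_neg_diskMobius ha hb] at hθ
  rw [diskMobius, diskMobius, norm_div, norm_div, div_le_div_iff₀ (norm_pos_iff.2 d₁)
    (norm_pos_iff.2 d₂), norm_sub_rev b, norm_sub_rev (g b)] at hθ
  exact hθ

lemma HolSelfUHP.iterate {F : ℂ → ℂ} (hF : HolSelfUHP F) (n : ℕ) : HolSelfUHP F^[n] :=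
  ⟨hF.1.iterate hF.2 n, hF.2.iterate n⟩

lemma ne_zero_of_mem_UHP {w : ℂ} (hw : w ∈ UHP) : w ≠ 0 := by
  rintro rfl
  simp [UHP] at hw

lemma sub_conj_ne_zero {a b : ℂ} (ha : a ∈ UHP) (hb : b ∈ UHP) : a - conj b ≠ 0 := by
  refine ne_zero_of_mem_UHP ?_
  change 0 < (a - conj b).im
  simp only [sub_im, conj_im, sub_neg_eq_add]
  exact add_pos ha hb

/-- For `b = I` this is the Cayley transform. -/
noncomputable def cayley (b u : ℂ) : ℂ := (u - b) / (u - conj b)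

noncomputable def cayleyInv (b v : ℂ) : ℂ := (b - conj b * v) / (1 - v)

/-- The pseudo-hyperbolic distance: `pseudoDist a b = tanh (pdH b a)`. -/
noncomputable def pseudoDist (a b : ℂ) : ℝ := ‖cayley b a‖

@[simp] lemma cayley_self (b : ℂ) : cayley b b = 0 := by simp [cayley]

@[simp] lemma cayleyInv_zero (b : ℂ) : cayleyInv b 0 = b := by simp [cayleyInv]

lemma pseudoDist_nonneg (a b : ℂ) : 0 ≤ pseudoDist a b := norm_nonneg _

lemma pseudoDist_eq (a b : ℂ) : pseudoDist a b = ‖a - b‖ / ‖a - conj b‖ := norm_div _ _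

lemma pseudoDist_lt_one {a b : ℂ} (ha : a ∈ UHP) (hb : b ∈ UHP) : pseudoDist a b < 1 := by
  rw [pseudoDist_eq, div_lt_one (norm_pos_iff.2 (sub_conj_ne_zero ha hb)),
    ← sq_lt_sq₀ (norm_nonneg _) (norm_nonneg _), Complex.sq_norm, Complex.sq_norm]
  simp only [normSq_apply, sub_re, sub_im, conj_re, conj_im]
  nlinarith [mul_pos (show 0 < a.im from ha) (show 0 < b.im from hb)]

lemma pseudoDist_pos {a b : ℂ} (ha : a ∈ UHP) (hb : b ∈ UHP) (hab : a ≠ b) :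
    0 < pseudoDist a b :=
  norm_pos_iff.2 (div_ne_zero (sub_ne_zero.2 hab) (sub_conj_ne_zero ha hb))

lemma mapsTo_cayley {b : ℂ} (hb : b ∈ UHP) : MapsTo (cayley b) UHP (ball 0 1) :=
  fun _ hu => mem_ball_zero_iff.2 (pseudoDist_lt_one hu hb)

lemma mapsTo_cayleyInv {b : ℂ} (hb : b ∈ UHP) : MapsTo (cayleyInv b) (ball 0 1) UHP := by
  intro v hv
  rw [mem_ball_zero_iff] at hv
  have hv1 : 1 - v ≠ 0 := sub_ne_zero.2 fun h => by simp [← h] at hv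
  have him : (cayleyInv b v).im = b.im * (1 - ‖v‖ ^ 2) / ‖1 - v‖ ^ 2 := by
    rw [cayleyInv, div_im, Complex.sq_norm, Complex.sq_norm]
    simp only [normSq_apply, sub_im, sub_re, mul_im, mul_re, conj_re, conj_im, one_re, one_im]
    ring
  change 0 < (cayleyInv b v).im
  rw [him]
  have : 0 < 1 - ‖v‖ ^ 2 := by nlinarith [norm_nonneg v]
  exact div_pos (mul_pos hb this) (by positivity)

lemma cayleyInv_cayley {b u : ℂ} (hb : b ∈ UHP) (hu : u ∈ UHP) :
    cayleyInv b (cayley b u) = u := by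
  have h₁ := sub_conj_ne_zero hu hb
  have h₂ := sub_conj_ne_zero hb hb
  rw [cayleyInv, cayley, div_eq_iff]
  · field_simp
    ring
  · rw [one_sub_div h₁]
    exact div_ne_zero (by simpa using h₂) h₁

lemma differentiableOn_cayley {b : ℂ} (hb : b ∈ UHP) : DifferentiableOn ℂ (cayley b) UHP :=
  (differentiableOn_id.sub_const b).div (differentiableOn_id.sub_const _)
    fun _ hu => sub_conj_ne_zero hu hb

lemma differentiableOn_cayleyInv (b : ℂ) : DifferentiableOn ℂ (cayleyInv b) (ball 0 1) :=
  ((differentiableOn_const b).sub ((differentiableOn_const _).mul differentiableOn_id)).div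
    ((differentiableOn_const 1).sub differentiableOn_id) fun v hv =>
      sub_ne_zero.2 fun h => by simp [← h] at hv

/-- `G` read in the disk charts centred at `ζ` and at `G ζ`. -/
noncomputable def diskConj (G : ℂ → ℂ) (ζ : ℂ) : ℂ → ℂ := cayley (G ζ) ∘ G ∘ cayleyInv ζ

section diskConj

variable {G : ℂ → ℂ} {ζ : ℂ}

lemma differentiableOn_diskConj (hG : HolSelfUHP G) (hζ : ζ ∈ UHP) :
    DifferentiableOn ℂ (diskConj G ζ) (ball 0 1) :=
  (differentiableOn_cayley (hG.2 hζ)).comp (hG.1.comp (differentiableOn_cayleyInv ζ)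
    (mapsTo_cayleyInv hζ)) (hG.2.comp (mapsTo_cayleyInv hζ))

lemma mapsTo_diskConj (hG : HolSelfUHP G) (hζ : ζ ∈ UHP) :
    MapsTo (diskConj G ζ) (ball 0 1) (ball 0 1) :=
  (mapsTo_cayley (hG.2 hζ)).comp (hG.2.comp (mapsTo_cayleyInv hζ))

@[simp] lemma diskConj_zero : diskConj G ζ 0 = 0 := by simp [diskConj]

lemma diskConj_cayley (hζ : ζ ∈ UHP) {w : ℂ} (hw : w ∈ UHP) :
    diskConj G ζ (cayley ζ w) = cayley (G ζ) (G w) := by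
  simp [diskConj, cayleyInv_cayley hζ hw]

end diskConj

theorem pseudoDist_map_le {G : ℂ → ℂ} (hG : HolSelfUHP G) {a b : ℂ} (ha : a ∈ UHP)
    (hb : b ∈ UHP) : pseudoDist (G a) (G b) ≤ pseudoDist a b := by
  have := Complex.norm_le_norm_of_mapsTo_ball (differentiableOn_diskConj hG hb)
    ((mapsTo_diskConj hG hb).mono_right ball_subset_closedBall) diskConj_zero
    (mem_ball_zero_iff.1 (mapsTo_cayley hb ha))
  rwa [diskConj_cayley hb ha] at this

/-- The hyperbolic difference quotient of `G` at `ζ`, read in the disk chart centred at `ζ`. -/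
noncomputable def hypDiffQuot (G : ℂ → ℂ) (ζ : ℂ) : ℂ → ℂ := dslope (diskConj G ζ) 0

section hypDiffQuot

variable {G : ℂ → ℂ} {ζ : ℂ}

lemma differentiableOn_hypDiffQuot (hG : HolSelfUHP G) (hζ : ζ ∈ UHP) :
    DifferentiableOn ℂ (hypDiffQuot G ζ) (ball 0 1) :=
  (differentiableOn_dslope (ball_mem_nhds _ one_pos)).2 (differentiableOn_diskConj hG hζ)

lemma mapsTo_hypDiffQuot (hG : HolSelfUHP G) (hζ : ζ ∈ UHP) :
    MapsTo (hypDiffQuot G ζ) (ball 0 1) (closedBall 0 1) := fun v hv => by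
  have := Complex.norm_dslope_le_div_of_mapsTo_ball (differentiableOn_diskConj hG hζ)
    (by simpa using (mapsTo_diskConj hG hζ).mono_right ball_subset_closedBall) hv
  simpa [hypDiffQuot] using this

lemma norm_hypDiffQuot_cayley_mul (hζ : ζ ∈ UHP) {w : ℂ} (hw : w ∈ UHP) :
    ‖hypDiffQuot G ζ (cayley ζ w)‖ * pseudoDist w ζ = pseudoDist (G w) (G ζ) := by
  rcases eq_or_ne (cayley ζ w) 0 with h | h
  · have : w = ζ := by simpa [cayley, sub_eq_zero, sub_conj_ne_zero hw hζ] using h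
    simp [this, pseudoDist]
  · rw [hypDiffQuot, dslope_of_ne _ h, slope_def_field, diskConj_zero, sub_zero, sub_zero,
      diskConj_cayley hζ hw, norm_div, pseudoDist, pseudoDist,
      div_mul_cancel₀ _ (norm_ne_zero_iff.2 h)]

end hypDiffQuot

lemma norm_sub_le_mul_norm_one_sub_conj_mul {p ν : ℂ} {c : ℝ} (hp : ‖p‖ ≤ c) (hc : c < 1)
    (hν : ‖ν‖ ≤ (1 - c) / 4) : ‖p - ν‖ ≤ (1 + c) / 2 * ‖1 - conj p * ν‖ := by
  have hc₀ : 0 ≤ c := (norm_nonneg p).trans hp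
  have hden : 1 - c * ‖ν‖ ≤ ‖1 - conj p * ν‖ := by
    have := norm_sub_norm_le (1 : ℂ) (conj p * ν)
    rw [norm_one, norm_mul, RCLike.norm_conj] at this
    nlinarith [norm_nonneg ν]
  calc ‖p - ν‖ ≤ c + ‖ν‖ := (norm_sub_le p ν).trans (by linarith)
    _ ≤ (1 + c) / 2 * (1 - c * ‖ν‖) := by
        nlinarith [mul_nonneg (mul_nonneg (norm_nonneg ν) (sub_nonneg.2 hc.le)) (by linarith :
          (0 : ℝ) ≤ 2 + c)]
    _ ≤ (1 + c) / 2 * ‖1 - conj p * ν‖ := by gcongr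

/-- `hpν` says that the pseudo-hyperbolic distance between `p` and `ν` is at most `R`. -/
lemma half_le_norm_of_mapsTo_closedBall {h : ℂ → ℂ} (hd : DifferentiableOn ℂ h (ball 0 1))
    (hh : MapsTo h (ball 0 1) (closedBall 0 1)) {p ν : ℂ} (hp : p ∈ ball 0 1)
    (hν : ν ∈ ball 0 1) {R : ℝ} (hR₀ : 0 ≤ R) (hR₁ : R < 1)
    (hpν : ‖p - ν‖ ≤ R * ‖1 - conj p * ν‖) (hhp : 1 - (1 - R) / 4 ≤ ‖h p‖) :
    1 / 2 ≤ ‖h ν‖ := by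
  set X := ‖h p‖
  set E := ‖h p - h ν‖
  have hX₁ : X ≤ 1 := mem_closedBall_zero_iff.1 (hh hp)
  have hpos : 0 < ‖1 - conj p * ν‖ := norm_pos_iff.2 <| one_sub_conj_mul_ne_zero_s13 <|
    mul_lt_one_of_nonneg_of_lt_one_left (norm_nonneg p) (mem_ball_zero_iff.1 hp)
      (mem_ball_zero_iff.1 hν).le
  have hE : E ≤ R * ‖1 - conj (h p) * h ν‖ := by
    refine le_of_mul_le_mul_right ?_ hpos
    calc E * ‖1 - conj p * ν‖ ≤ ‖p - ν‖ * ‖1 - conj (h p) * h ν‖ :=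
          norm_sub_mul_le_of_mapsTo_closedBall hd hh hp hν
      _ ≤ R * ‖1 - conj p * ν‖ * ‖1 - conj (h p) * h ν‖ := by gcongr
      _ = R * ‖1 - conj (h p) * h ν‖ * ‖1 - conj p * ν‖ := by ring
  have hG : ‖1 - conj (h p) * h ν‖ ≤ (1 - X ^ 2) + X * E := by
    have h₁ : ‖1 - conj (h p) * h p‖ = 1 - X ^ 2 := by
      rw [conj_mul', ← ofReal_pow, ← ofReal_one, ← ofReal_sub, norm_real, Real.norm_eq_abs,
        abs_of_nonneg (by nlinarith [norm_nonneg (h p)])]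
    calc ‖1 - conj (h p) * h ν‖ = ‖(1 - conj (h p) * h p) + conj (h p) * (h p - h ν)‖ := by
          ring_nf
      _ ≤ ‖1 - conj (h p) * h p‖ + ‖conj (h p) * (h p - h ν)‖ := norm_add_le _ _
      _ = (1 - X ^ 2) + X * E := by rw [h₁, norm_mul, RCLike.norm_conj]
  have hE₀ : 0 ≤ E := norm_nonneg _
  have hER : E ≤ R / 2 := by
    have h₁ : E * (1 - R * X) ≤ R * (1 - X ^ 2) := by nlinarith
    have h₂ : R * (1 - X ^ 2) ≤ R / 2 * (1 - R) := by
      nlinarith [mul_nonneg hR₀ (sub_nonneg.2 hX₁)]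
    have h₃ : E * (1 - R) ≤ E * (1 - R * X) := by
      nlinarith [mul_nonneg (mul_nonneg hE₀ hR₀) (sub_nonneg.2 hX₁)]
    exact le_of_mul_le_mul_right (h₃.trans (h₁.trans h₂)) (by linarith)
  linarith [norm_sub_norm_le (h p) (h ν)]

lemma half_pseudoDist_le_pseudoDist_map {G : ℂ → ℂ} (hG : HolSelfUHP G) {ζ u v : ℂ}
    (hζ : ζ ∈ UHP) (hu : u ∈ UHP) (hv : v ∈ UHP) {c : ℝ} (hc : c < 1)
    (hu₀ : 0 < pseudoDist u ζ) (huc : pseudoDist u ζ ≤ c) (hvc : pseudoDist v ζ ≤ (1 - c) / 4)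
    (hGu : (1 - (1 - c) / 8) * pseudoDist u ζ ≤ pseudoDist (G u) (G ζ)) :
    pseudoDist v ζ / 2 ≤ pseudoDist (G v) (G ζ) := by
  have hquot : 1 - (1 - (1 + c) / 2) / 4 ≤ ‖hypDiffQuot G ζ (cayley ζ u)‖ := by
    rw [← norm_hypDiffQuot_cayley_mul hζ hu] at hGu
    linarith [le_of_mul_le_mul_right hGu hu₀]
  have := half_le_norm_of_mapsTo_closedBall (differentiableOn_hypDiffQuot hG hζ)
    (mapsTo_hypDiffQuot hG hζ) (mapsTo_cayley hζ hu) (mapsTo_cayley hζ hv)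
    (by linarith [pseudoDist_nonneg u ζ]) (by linarith)
    (norm_sub_le_mul_norm_one_sub_conj_mul huc hc hvc) hquot
  rw [← norm_hypDiffQuot_cayley_mul hζ hv]
  nlinarith [pseudoDist_nonneg v ζ]

theorem tendsto_pseudoDist_iterate_of_tendsto_step {F : ℂ → ℂ} (hF : HolSelfUHP F)
    (hfix : ∀ w ∈ UHP, F w ≠ w) {w₀ x : ℂ} (hw₀ : w₀ ∈ UHP) (hx : x ∈ UHP)
    (hstep : Tendsto (fun n => pseudoDist (F^[n + 1] w₀) (F^[n] w₀)) atTop (𝓝 0)) :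
    Tendsto (fun n => pseudoDist (F^[n] x) (F^[n] w₀)) atTop (𝓝 0) := by
  set d := fun n => pseudoDist (F^[n] x) (F^[n] w₀)
  set σ := fun n => pseudoDist (F^[n + 1] w₀) (F^[n] w₀)
  have hζ : ∀ n, F^[n] w₀ ∈ UHP := fun n => hF.2.iterate n hw₀
  have hd_anti : Antitone d := antitone_nat_of_succ_le fun n => by
    simp only [d, Function.iterate_succ_apply']
    exact pseudoDist_map_le hF (hF.2.iterate n hx) (hζ n)
  have hd_bdd : BddBelow (range d) := ⟨0, by rintro _ ⟨n, rfl⟩; exact pseudoDist_nonneg _ _⟩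
  have hdL := tendsto_atTop_ciInf hd_anti hd_bdd
  set L := ⨅ n, d n
  have hL₀ : 0 ≤ L := le_ciInf fun n => pseudoDist_nonneg _ _
  rcases hL₀.eq_or_lt with hL | hL
  · rwa [← hL] at hdL
  exfalso
  set c := pseudoDist x w₀
  have hc : c < 1 := pseudoDist_lt_one hx hw₀
  have hc₀ : 0 ≤ c := pseudoDist_nonneg x w₀
  have hdc : ∀ n, d n ≤ c := fun n => pseudoDist_map_le (hF.iterate n) hx hw₀
  obtain ⟨m, hdm, hσm⟩ : ∃ m, (1 - (1 - c) / 8) * d m ≤ L ∧ σ m ≤ (1 - c) / 4 := by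
    have h₁ : ∀ᶠ n in atTop, d n < L / (1 - (1 - c) / 8) :=
      hdL.eventually (gt_mem_nhds ((lt_div_iff₀ (by linarith)).2 (by nlinarith)))
    have h₂ : ∀ᶠ n in atTop, σ n ≤ (1 - c) / 4 := hstep.eventually (ge_mem_nhds (by linarith))
    obtain ⟨m, h₁, h₂⟩ := (h₁.and h₂).exists
    rw [lt_div_iff₀ (by linarith), mul_comm] at h₁
    exact ⟨m, h₁.le, h₂⟩
  have hσ_ge : ∀ k, σ m / 2 ≤ σ (k + m) := fun k => by
    have := half_pseudoDist_le_pseudoDist_map (hF.iterate k) (hζ m) (hF.2.iterate m hx)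
      (hζ (m + 1)) hc (hL.trans_le (ciInf_le hd_bdd m)) (hdc m) hσm
      (by simpa only [← Function.iterate_add_apply] using hdm.trans (ciInf_le hd_bdd (k + m)))
    simpa only [σ, ← Function.iterate_add_apply, add_assoc] using this
  have hσm₀ : 0 < σ m :=
    pseudoDist_pos (hζ (m + 1)) (hζ m) (by rw [Function.iterate_succ_apply']; exact hfix _ (hζ m))
  obtain ⟨k, hk⟩ := ((hstep.comp (tendsto_add_atTop_nat m)).eventually
    (gt_mem_nhds (half_pos hσm₀))).exists
  exact (hσ_ge k).not_gt hk

lemma pseudoDist_mul_im_le {a b : ℂ} (ha : a ∈ UHP) (hb : b ∈ UHP) :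
    pseudoDist a b * b.im ≤ ‖a - b‖ := by
  have him : b.im ≤ ‖a - conj b‖ := by
    refine le_trans ?_ (abs_im_le_norm _)
    rw [sub_im, conj_im, sub_neg_eq_add, abs_of_pos (add_pos ha hb)]
    linarith [show 0 < a.im from ha]
  rw [pseudoDist_eq]
  calc ‖a - b‖ / ‖a - conj b‖ * b.im ≤ ‖a - b‖ / ‖a - conj b‖ * ‖a - conj b‖ := by gcongr
    _ = ‖a - b‖ := div_mul_cancel₀ _ (norm_ne_zero_iff.2 (sub_conj_ne_zero ha hb))

lemma one_sub_pseudoDist_mul_norm_sub_le {a b : ℂ} (ha : a ∈ UHP) (hb : b ∈ UHP) :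
    (1 - pseudoDist a b) * ‖a - b‖ ≤ 2 * pseudoDist a b * b.im := by
  have hsub : ‖a - b‖ = pseudoDist a b * ‖a - conj b‖ := by
    rw [pseudoDist_eq, div_mul_cancel₀ _ (norm_ne_zero_iff.2 (sub_conj_ne_zero ha hb))]
  have hconj : ‖a - conj b‖ ≤ ‖a - b‖ + 2 * b.im := by
    calc ‖a - conj b‖ = ‖(a - b) + (2 * b.im : ℝ) * I‖ := by rw [← sub_conj]; ring_nf
      _ ≤ ‖a - b‖ + 2 * b.im := by
        grw [norm_add_le, norm_mul, norm_I, mul_one, norm_real, Real.norm_of_nonneg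
          (by linarith [show 0 < b.im from hb])]
  nlinarith [pseudoDist_nonneg a b]

lemma tendsto_im_div_norm_of_le_pseudoDist {F : ℂ → ℂ} (hF : MapsTo F UHP UHP)
    (hnt : ∀ w : ℕ → ℂ, (∀ n, w n ∈ UHP) → NonTangToInf w →
      Tendsto (fun n => F (w n) / w n) atTop (𝓝 1))
    {ζ : ℕ → ℂ} (hζ : ∀ n, ζ n ∈ UHP) (hζ_tendsto : Tendsto (fun n => ‖ζ n‖) atTop atTop)
    {s : ℝ} (hs : 0 < s) (hstep : ∀ n, s ≤ pseudoDist (F (ζ n)) (ζ n)) :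
    Tendsto (fun n => (ζ n).im / ‖ζ n‖) atTop (𝓝 0) := by
  refine tendsto_order.2 ⟨fun a ha => Eventually.of_forall fun n =>
    ha.trans_le (div_nonneg (hζ n).le (norm_nonneg _)), fun ε hε => ?_⟩
  by_contra hfreq
  obtain ⟨φ, hφ, hφε⟩ := extraction_of_frequently_atTop (P := fun n => ε ≤ (ζ n).im / ‖ζ n‖)
    (by simpa only [not_eventually, not_lt] using hfreq)
  have hpos : ∀ k, 0 < ‖ζ (φ k)‖ := fun k => norm_pos_iff.2 (ne_zero_of_mem_UHP (hζ _))
  have hslope : ∀ k, ε * ‖ζ (φ k)‖ ≤ (ζ (φ k)).im := fun k => (le_div_iff₀ (hpos k)).1 (hφε k)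
  have hlim := hnt (ζ ∘ φ) (fun k => hζ _)
    ⟨hζ_tendsto.comp hφ.tendsto_atTop, ε, hε, hslope⟩
  have hle : ∀ k, s * ε ≤ ‖F (ζ (φ k)) / ζ (φ k) - 1‖ := fun k => by
    refine le_of_mul_le_mul_right ?_ (hpos k)
    rw [← norm_mul, sub_one_mul, div_mul_cancel₀ _ (ne_zero_of_mem_UHP (hζ _)), mul_assoc]
    calc s * (ε * ‖ζ (φ k)‖) ≤ pseudoDist (F (ζ (φ k))) (ζ (φ k)) * (ζ (φ k)).im := by
          gcongr
          · exact pseudoDist_nonneg _ _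
          · exact hstep _
          · exact hslope k
      _ ≤ ‖F (ζ (φ k)) - ζ (φ k)‖ := pseudoDist_mul_im_le (hF (hζ _)) (hζ _)
  have := ge_of_tendsto ((hlim.sub_const 1).norm) (Eventually.of_forall hle)
  rw [sub_self, norm_zero] at this
  exact (mul_pos hs hε).not_ge this

lemma norm_div_sub_one_le {a b : ℂ} (ha : a ∈ UHP) (hb : b ∈ UHP) {c : ℝ}
    (hc : pseudoDist a b ≤ c) (hc₁ : c < 1) :
    ‖a / b - 1‖ ≤ 2 / (1 - c) * (pseudoDist a b * (b.im / ‖b‖)) := by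
  have hb₀ : 0 < ‖b‖ := norm_pos_iff.2 (ne_zero_of_mem_UHP hb)
  have h := one_sub_pseudoDist_mul_norm_sub_le ha hb
  have hrhs : 2 / (1 - c) * (pseudoDist a b * (b.im / ‖b‖)) * ‖b‖
      = 2 * pseudoDist a b * b.im / (1 - c) := by
    field_simp
  rw [div_sub_one (ne_zero_of_mem_UHP hb), norm_div, div_le_iff₀ hb₀, hrhs,
    le_div_iff₀ (by linarith)]
  nlinarith [norm_nonneg (a - b)]

/-- The first factor tends to `0` if the hyperbolic step of the orbit of `w₀` does, the second
one otherwise. -/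
lemma tendsto_pseudoDist_iterate_mul_im_div_norm {F : ℂ → ℂ} (hF : HolSelfUHP F)
    (hfix : ∀ w ∈ UHP, F w ≠ w)
    (hnt : ∀ w : ℕ → ℂ, (∀ n, w n ∈ UHP) → NonTangToInf w →
      Tendsto (fun n => F (w n) / w n) atTop (𝓝 1))
    {w₀ x : ℂ} (hw₀ : w₀ ∈ UHP) (hesc : Tendsto (fun n => ‖F^[n] w₀‖) atTop atTop)
    (hx : x ∈ UHP) :
    Tendsto (fun n => pseudoDist (F^[n] x) (F^[n] w₀) * ((F^[n] w₀).im / ‖F^[n] w₀‖))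
      atTop (𝓝 0) := by
  have hζ : ∀ n, F^[n] w₀ ∈ UHP := fun n => hF.2.iterate n hw₀
  have hslope : ∀ n, 0 ≤ (F^[n] w₀).im / ‖F^[n] w₀‖ := fun n =>
    div_nonneg (hζ n).le (norm_nonneg _)
  set σ := fun n => pseudoDist (F^[n + 1] w₀) (F^[n] w₀)
  have hσ_anti : Antitone σ := antitone_nat_of_succ_le fun n => by
    have := pseudoDist_map_le hF (hζ (n + 1)) (hζ n)
    simpa only [σ, ← Function.iterate_succ_apply' F] using this
  have hσ_bdd : BddBelow (range σ) := ⟨0, by rintro _ ⟨n, rfl⟩; exact pseudoDist_nonneg _ _⟩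
  have hσ := tendsto_atTop_ciInf hσ_anti hσ_bdd
  rcases (le_ciInf fun n => pseudoDist_nonneg _ _ : (0 : ℝ) ≤ ⨅ n, σ n).eq_or_lt with h | h
  · have hd := tendsto_pseudoDist_iterate_of_tendsto_step hF hfix hw₀ hx (h ▸ hσ)
    refine squeeze_zero (fun n => mul_nonneg (pseudoDist_nonneg _ _) (hslope n))
      (fun n => ?_) hd
    exact mul_le_of_le_one_right (pseudoDist_nonneg _ _)
      (div_le_one_of_le₀ (im_le_norm _) (norm_nonneg _))
  · have hs := tendsto_im_div_norm_of_le_pseudoDist hF.2 hnt hζ hesc h fun n => by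
      simpa only [σ, Function.iterate_succ_apply'] using ciInf_le hσ_bdd n
    refine squeeze_zero (fun n => mul_nonneg (pseudoDist_nonneg _ _) (hslope n))
      (fun n => ?_) (by simpa using hs.const_mul (pseudoDist x w₀))
    exact mul_le_mul_of_nonneg_right (pseudoDist_map_le (hF.iterate n) hx hw₀) (hslope n)

theorem tendsto_iterate_div_iterate {F : ℂ → ℂ} (hF : HolSelfUHP F)
    (hfix : ∀ w ∈ UHP, F w ≠ w)
    (hnt : ∀ w : ℕ → ℂ, (∀ n, w n ∈ UHP) → NonTangToInf w →
      Tendsto (fun n => F (w n) / w n) atTop (𝓝 1))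
    {w₀ x : ℂ} (hw₀ : w₀ ∈ UHP) (hesc : Tendsto (fun n => ‖F^[n] w₀‖) atTop atTop)
    (hx : x ∈ UHP) :
    Tendsto (fun n => F^[n] x / F^[n] w₀) atTop (𝓝 1) := by
  have hc := pseudoDist_lt_one hx hw₀
  rw [tendsto_iff_norm_sub_tendsto_zero]
  refine squeeze_zero (fun n => norm_nonneg _) (fun n => norm_div_sub_one_le
    (hF.2.iterate n hx) (hF.2.iterate n hw₀) (pseudoDist_map_le (hF.iterate n) hx hw₀) hc) ?_
  simpa using (tendsto_pseudoDist_iterate_mul_im_div_norm hF hfix hnt hw₀ hesc hx).const_mul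
    (2 / (1 - pseudoDist x w₀))

/-- Schwarz–Pick makes the family equicontinuous relative to its size. -/
theorem tendstoLocallyUniformlyOn_div_of_tendsto {ι : Type*} {l : Filter ι} {f : ι → ℂ → ℂ}
    (hf : ∀ i, HolSelfUHP (f i)) {c : ι → ℂ}
    (h : ∀ x ∈ UHP, Tendsto (fun i => f i x / c i) l (𝓝 1)) :
    TendstoLocallyUniformlyOn (fun i w => f i w / c i) (fun _ => 1) l UHP := by
  rw [Metric.tendstoLocallyUniformlyOn_iff]
  intro ε hε x hx
  set δ := min (1 / 2) (ε / 16)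
  have hδ : 0 < δ := lt_min one_half_pos (by linarith)
  refine ⟨UHP ∩ ball x (δ * x.im), inter_mem_nhdsWithin _ (ball_mem_nhds _ (mul_pos hδ hx)), ?_⟩
  filter_upwards [(h x hx).eventually (ball_mem_nhds 1 (lt_min (by linarith : 0 < ε / 4)
    one_pos))] with i hi y ⟨hy, hyx⟩
  rw [dist_eq] at hi
  rw [mem_ball, dist_eq] at hyx
  have hxy : pseudoDist y x ≤ δ := by
    have := pseudoDist_mul_im_le hy hx
    exact le_of_mul_le_mul_right (by linarith) (show 0 < x.im from hx)
  have hfyx : ‖f i y - f i x‖ ≤ 4 * δ * ‖f i x‖ := by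
    have hρ := (pseudoDist_map_le (hf i) hy hx).trans hxy
    have := one_sub_pseudoDist_mul_norm_sub_le ((hf i).2 hy) ((hf i).2 hx)
    nlinarith [min_le_left (1 / 2 : ℝ) (ε / 16), im_le_norm (f i x), norm_nonneg (f i y - f i x),
      pseudoDist_nonneg (f i y) (f i x), show 0 < (f i x).im from (hf i).2 hx]
  have hquot : ‖f i x / c i‖ ≤ 2 := by
    linarith [norm_le_norm_sub_add (f i x / c i) 1, norm_one (α := ℂ), lt_min_iff.1 hi]
  rw [dist_comm, dist_eq]
  calc ‖f i y / c i - 1‖ = ‖(f i y - f i x) / c i + (f i x / c i - 1)‖ := by ring_nf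
    _ ≤ ‖f i y - f i x‖ / ‖c i‖ + ‖f i x / c i - 1‖ := by grw [norm_add_le, norm_div]
    _ ≤ 4 * δ * ‖f i x / c i‖ + ‖f i x / c i - 1‖ := by
        grw [hfyx, norm_div, mul_div_assoc]
    _ < ε := by nlinarith [min_le_right (1 / 2 : ℝ) (ε / 16), lt_min_iff.1 hi]

theorem stmt13 (F : ℂ → ℂ) (hF : ParabolicAtInf F) (w₀ : ℂ) (hw₀ : w₀ ∈ UHP) :
    TendstoLocallyUniformlyOn (fun n w => F^[n] w / F^[n] w₀) (fun _ => 1) atTop UHP := by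
  obtain ⟨hF, hfix, hesc, hnt⟩ := hF
  have hesc₀ : Tendsto (fun n => ‖F^[n] w₀‖) atTop atTop := tendsto_atTop.2 fun M =>
    (hesc {w₀} (singleton_subset_iff.2 hw₀) isCompact_singleton M).mono fun _ h => h w₀ rfl
  exact tendstoLocallyUniformlyOn_div_of_tendsto hF.iterate fun x hx =>
    tendsto_iterate_div_iterate hF hfix hnt hw₀ hesc₀ hx
end
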